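/- arXiv:1805.06754 — 3 statements merged into one kernel-verified Lean document; each statement's English description precedes it below -/
import Mathlib

section
/- (Local existence, from the proof of Theorem 2.1.) Let Ψ : C([a,b],E) → C([a,b],E) be a locally contracting Volterra operator with constant q < 1. Then there exists γ ∈ (0, b−a] and a local solution of the equation y = Ψy on [a,a+γ]. -/
/-!
Freeze time after `a + δ` with `P t = min t (a + δ)`. The operator `z ↦ Ψ (z ∘ P) ∘ P` only
sees `[a, a + δ]`, so property (q1) of local contraction, for the `δ` belonging to a radius
`r ≥ ‖Ψ 0‖ / (1 - q)`, makes it a contraction of the closed `r`-ball of `C([a,b], E)` into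
itself. Its Banach fixed point `y` satisfies `Ψ (y ∘ P) = y ∘ P` on `[a, a + δ]`, which is a
local solution on `[a, a + min δ (b - a)]`.
-/

open Set Filter Topology

noncomputable section

variable {E : Type*} [NormedAddCommGroup E] [NormedSpace ℝ E] [CompleteSpace E]

/-- The partial sup-norm `‖y‖_ξ = sup_{t ∈ [a, a+ξ]} ‖y t‖` on `C([a,b], E)`. -/
def partNorm (a b ξ : ℝ) (y : C(Set.Icc a b, E)) : ℝ :=
  sSup ((fun t : Set.Icc a b => ‖y t‖) '' {t : Set.Icc a b | (t : ℝ) ≤ a + ξ})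

/-- `y₁` and `y₂` agree on `[a, a+ξ]`. -/
def eqUpTo (a b ξ : ℝ) (y₁ y₂ : C(Set.Icc a b, E)) : Prop :=
  ∀ t : Set.Icc a b, (t : ℝ) ≤ a + ξ → y₁ t = y₂ t

/-- A Volterra operator on `C([a,b], E)` (in the sense of Tikhonov). -/
def IsVolterra (a b : ℝ) (Ψ : C(Set.Icc a b, E) → C(Set.Icc a b, E)) : Prop :=
  ∀ ξ ∈ Set.Ioo (0:ℝ) (b - a), ∀ y₁ y₂ : C(Set.Icc a b, E),
    eqUpTo a b ξ y₁ y₂ → eqUpTo a b ξ (Ψ y₁) (Ψ y₂)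

/-- A locally contracting operator with contraction constant `q`. -/
def IsLocallyContracting (a b q : ℝ) (Ψ : C(Set.Icc a b, E) → C(Set.Icc a b, E)) : Prop :=
  ∀ r > (0:ℝ), ∃ δ > (0:ℝ), ∀ y₁ y₂ : C(Set.Icc a b, E),
    partNorm a b (b - a) y₁ ≤ r → partNorm a b (b - a) y₂ ≤ r →
      (partNorm a b δ (Ψ y₁ - Ψ y₂) ≤ q * partNorm a b δ (y₁ - y₂)) ∧
      (∀ γ ∈ Set.Ioc (0:ℝ) (b - a - δ), eqUpTo a b γ y₁ y₂ →
        partNorm a b (γ + δ) (Ψ y₁ - Ψ y₂) ≤ q * partNorm a b (γ + δ) (y₁ - y₂))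

/-- A local solution of `y = Ψ y` on `[a, a+γ]`: a function continuous on `[a, a+γ]`
admitting a continuous extension `y ∈ C([a,b], E)` with `(Ψ y) t = g t` on `[a, a+γ]`. -/
def IsLocalSolution (a b γ : ℝ) (Ψ : C(Set.Icc a b, E) → C(Set.Icc a b, E))
    (g : ℝ → E) : Prop :=
  0 < γ ∧ γ ≤ b - a ∧ ContinuousOn g (Set.Icc a (a + γ)) ∧
  ∃ y : C(Set.Icc a b, E),
    (∀ t : Set.Icc a b, (t : ℝ) ≤ a + γ → y t = g t) ∧
    (∀ t : Set.Icc a b, (t : ℝ) ≤ a + γ → Ψ y t = g t)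

/-- A maximally extended solution of `y = Ψ y` on `[a, a+ζ)`. -/
def IsMaxExtSolution (a b ζ : ℝ) (Ψ : C(Set.Icc a b, E) → C(Set.Icc a b, E))
    (g : ℝ → E) : Prop :=
  0 < ζ ∧ ζ ≤ b - a ∧ (∀ γ ∈ Set.Ioo (0:ℝ) ζ, IsLocalSolution a b γ Ψ g) ∧
  Tendsto (fun γ => sSup ((fun t => ‖g t‖) '' Set.Icc a (a + γ))) (𝓝[<] ζ) atTop

/-- The bound on `‖T 0‖` makes the ball `T`-invariant, so Banach's theorem applies there. -/
theorem exists_fixedPoint_of_lipschitzOnWith_closedBall {X : Type*} [NormedAddCommGroup X]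
    [CompleteSpace X] {T : X → X} {q : NNReal} {r : ℝ} (hq : q < 1)
    (hT0 : ‖T 0‖ ≤ (1 - q) * r) (hT : LipschitzOnWith q T (Metric.closedBall 0 r)) :
    ∃ y, T y = y := by
  have hq' : (q : ℝ) < 1 := hq
  have hr : 0 ≤ r := nonneg_of_mul_nonneg_right ((norm_nonneg _).trans hT0) (by linarith)
  have h0 : (0 : X) ∈ Metric.closedBall 0 r := Metric.mem_closedBall_self hr
  have hmaps : MapsTo T (Metric.closedBall 0 r) (Metric.closedBall 0 r) := by
    intro z hz
    have hTz : ‖T z - T 0‖ ≤ q * ‖z‖ := by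
      simpa only [dist_eq_norm, sub_zero] using hT.dist_le_mul z hz 0 h0
    rw [mem_closedBall_zero_iff] at hz ⊢
    calc ‖T z‖ ≤ ‖T z - T 0‖ + ‖T 0‖ := norm_le_norm_sub_add _ _
      _ ≤ q * r + (1 - q) * r := add_le_add (hTz.trans (by gcongr)) hT0
      _ = r := by ring
  obtain ⟨y, -, hy, -⟩ := ContractingWith.exists_fixedPoint' Metric.isClosed_closedBall.isComplete
    hmaps ⟨hq, hT.mapsToRestrict hmaps⟩ h0 (edist_ne_top _ _)
  exact ⟨y, hy⟩

section Truncation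

variable {F : Type*} [NormedAddCommGroup F]

lemma partNorm_nonneg (a b ξ : ℝ) (y : C(Icc a b, F)) : 0 ≤ partNorm a b ξ y :=
  Real.sSup_nonneg (by rintro x ⟨t, -, rfl⟩; exact norm_nonneg _)

lemma partNorm_le_norm (a b ξ : ℝ) (y : C(Icc a b, F)) : partNorm a b ξ y ≤ ‖y‖ :=
  Real.sSup_le (by rintro x ⟨t, -, rfl⟩; exact y.norm_coe_le_norm t) (norm_nonneg y)

lemma norm_apply_le_partNorm {a b ξ : ℝ} (y : C(Icc a b, F)) {t : Icc a b}
    (ht : (t : ℝ) ≤ a + ξ) : ‖y t‖ ≤ partNorm a b ξ y :=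
  le_csSup ⟨‖y‖, by rintro x ⟨s, -, rfl⟩; exact y.norm_coe_le_norm s⟩ ⟨t, ht, rfl⟩

variable {a b δ : ℝ}

def stopAt (a b δ : ℝ) (hδ : 0 ≤ δ) : C(Icc a b, Icc a b) where
  toFun t := ⟨min (t : ℝ) (a + δ), le_min t.2.1 (by linarith [t.2.1]), min_le_of_left_le t.2.2⟩
  continuous_toFun := (continuous_subtype_val.min continuous_const).subtype_mk _

lemma stopAt_of_le (hδ : 0 ≤ δ) {t : Icc a b} (ht : (t : ℝ) ≤ a + δ) : stopAt a b δ hδ t = t :=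
  Subtype.ext (min_eq_left ht)

lemma norm_comp_stopAt_le (hδ : 0 ≤ δ) (z : C(Icc a b, F)) :
    ‖z.comp (stopAt a b δ hδ)‖ ≤ partNorm a b δ z :=
  (ContinuousMap.norm_le _ (partNorm_nonneg a b δ z)).2 fun _ =>
    norm_apply_le_partNorm z (min_le_right _ _)

def truncate (Ψ : C(Icc a b, F) → C(Icc a b, F)) (δ : ℝ) (hδ : 0 ≤ δ) :
    C(Icc a b, F) → C(Icc a b, F) :=
  fun z => (Ψ (z.comp (stopAt a b δ hδ))).comp (stopAt a b δ hδ)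

lemma norm_truncate_zero_le (Ψ : C(Icc a b, F) → C(Icc a b, F)) (hδ : 0 ≤ δ) :
    ‖truncate Ψ δ hδ 0‖ ≤ ‖Ψ 0‖ := by
  rw [truncate, ContinuousMap.zero_comp]
  exact (norm_comp_stopAt_le hδ _).trans (partNorm_le_norm _ _ _ _)

/-- Since `P` freezes time after `a + δ`, the sup-norm of the truncated operator only sees
`[a, a + δ]`, where `Ψ` contracts in `‖·‖_δ`. -/
lemma lipschitzOnWith_truncate {Ψ : C(Icc a b, F) → C(Icc a b, F)} {q r : ℝ} (hδ : 0 ≤ δ)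
    (hΨ : ∀ y₁ y₂ : C(Icc a b, F), partNorm a b (b - a) y₁ ≤ r → partNorm a b (b - a) y₂ ≤ r →
      partNorm a b δ (Ψ y₁ - Ψ y₂) ≤ q * partNorm a b δ (y₁ - y₂)) :
    LipschitzOnWith q.toNNReal (truncate Ψ δ hδ) (Metric.closedBall 0 r) := by
  set P := stopAt a b δ hδ
  have hP : ∀ z : C(Icc a b, F), ‖z.comp P‖ ≤ ‖z‖ := fun z =>
    (norm_comp_stopAt_le hδ z).trans (partNorm_le_norm _ _ _ _)
  have hball : ∀ z : C(Icc a b, F), ‖z‖ ≤ r → partNorm a b (b - a) (z.comp P) ≤ r := fun z hz =>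
    (partNorm_le_norm _ _ _ _).trans ((hP z).trans hz)
  refine LipschitzOnWith.of_dist_le_mul fun z hz w hw => ?_
  rw [mem_closedBall_zero_iff] at hz hw
  rw [dist_eq_norm, dist_eq_norm, Real.coe_toNNReal']
  have hq : 0 ≤ max q 0 := le_max_right _ _
  calc ‖truncate Ψ δ hδ z - truncate Ψ δ hδ w‖ = ‖(Ψ (z.comp P) - Ψ (w.comp P)).comp P‖ := by
        rw [truncate, truncate, ContinuousMap.sub_comp]
    _ ≤ partNorm a b δ (Ψ (z.comp P) - Ψ (w.comp P)) := norm_comp_stopAt_le hδ _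
    _ ≤ q * partNorm a b δ (z.comp P - w.comp P) := hΨ _ _ (hball z hz) (hball w hw)
    _ ≤ max q 0 * ‖(z - w).comp P‖ := by
        rw [← ContinuousMap.sub_comp]
        exact mul_le_mul (le_max_left _ _) (partNorm_le_norm _ _ _ _) (partNorm_nonneg _ _ _ _) hq
    _ ≤ max q 0 * ‖z - w‖ := mul_le_mul_of_nonneg_left (hP _) hq

lemma isLocalSolution_of_truncate_eq (hab : a ≤ b) {Ψ : C(Icc a b, F) → C(Icc a b, F)}
    (hδ : 0 ≤ δ) {y : C(Icc a b, F)} (hy : truncate Ψ δ hδ y = y) {γ : ℝ} (hγ : 0 < γ)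
    (hγb : γ ≤ b - a) (hγδ : γ ≤ δ) :
    IsLocalSolution a b γ Ψ (fun s => y (projIcc a b hab s)) := by
  refine ⟨hγ, hγb, (y.continuous.comp continuous_projIcc).continuousOn,
    y.comp (stopAt a b δ hδ), fun t ht => ?_, fun t ht => ?_⟩
  all_goals
    have hPt : stopAt a b δ hδ t = t := stopAt_of_le hδ (by linarith)
    simp only [projIcc_val]
  · rw [ContinuousMap.comp_apply, hPt]
  · rw [← hPt, ← ContinuousMap.comp_apply, ← truncate, hy, hPt]

end Truncation

theorem exists_local_solution_general
    (a b q : ℝ) (hab : a < b) (hq : q < 1)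
    (Ψ : C(Set.Icc a b, E) → C(Set.Icc a b, E))
    (hLC : IsLocallyContracting a b q Ψ) :
    ∃ γ ∈ Set.Ioc (0:ℝ) (b - a), ∃ g : ℝ → E, IsLocalSolution a b γ Ψ g := by
  have hq' : (q.toNNReal : ℝ) < 1 := Real.toNNReal_lt_one.2 hq
  set r := (‖Ψ 0‖ + 1) / (1 - q.toNNReal)
  have hr : (1 - q.toNNReal) * r = ‖Ψ 0‖ + 1 := mul_div_cancel₀ _ (by linarith)
  obtain ⟨δ, hδ, hΨ⟩ := hLC r (div_pos (by positivity) (by linarith))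
  obtain ⟨y, hy⟩ := exists_fixedPoint_of_lipschitzOnWith_closedBall (Real.toNNReal_lt_one.2 hq)
    (by linarith [norm_truncate_zero_le Ψ hδ.le])
    (lipschitzOnWith_truncate hδ.le fun y₁ y₂ h₁ h₂ => (hΨ y₁ y₂ h₁ h₂).1)
  have hγ : 0 < min δ (b - a) := lt_min hδ (sub_pos.2 hab)
  exact ⟨_, ⟨hγ, min_le_right _ _⟩, _,
    isLocalSolution_of_truncate_eq hab.le hδ.le hy hγ (min_le_right _ _) (min_le_left _ _)⟩

/-- Local existence for a locally contracting Volterra operator. -/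
theorem exists_local_solution
    (a b q : ℝ) (hab : a < b) (hq : q < 1)
    (Ψ : C(Set.Icc a b, E) → C(Set.Icc a b, E))
    (hVol : IsVolterra a b Ψ) (hLC : IsLocallyContracting a b q Ψ) :
    ∃ γ ∈ Set.Ioc (0:ℝ) (b - a), ∃ g : ℝ → E, IsLocalSolution a b γ Ψ g :=
  exists_local_solution_general a b q hab hq Ψ hLC
end
end

section
/- (Example 2.1, global solvability for positive delay.) Fix λ ∈ (0, π]. Then there exists a unique (up to almost-everywhere equality) function y ∈ L¹([0,π], ℝ) satisfying, for almost every t ∈ [0,π]: y(t) = 0 if t < λ, and y(t) = (∫₀^{t−λ} y(s) ds)² + 1 if t ≥ λ. -/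
open Set Filter Topology Real MeasureTheory

noncomputable def delaySeq (lam : ℝ) : ℕ → (ℝ → ℝ)
  | 0 => fun _ => 0
  | (n+1) => fun t => if t < lam then 0 else (∫ s in (0:ℝ)..(t - lam), delaySeq lam n s) ^ 2 + 1

lemma delaySeq_locInt (lam : ℝ) (n : ℕ) :
    LocallyIntegrable (delaySeq lam n) volume := by
  induction n with
  | zero => exact (continuous_const : Continuous (fun _ : ℝ => (0:ℝ))).locallyIntegrable
  | succ n ih =>
    have hInt : ∀ a b : ℝ, IntervalIntegrable (delaySeq lam n) volume a b := fun a b => by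
      rw [intervalIntegrable_iff]
      exact (ih.integrableOn_isCompact isCompact_uIcc).mono_set Ioc_subset_Icc_self
    have hcont : Continuous fun t => (∫ s in (0:ℝ)..(t - lam), delaySeq lam n s) ^ 2 + 1 := by
      have h1 := intervalIntegral.continuous_primitive hInt 0
      exact ((h1.comp (continuous_id.sub continuous_const)).pow 2).add continuous_const
    have heq : delaySeq lam (n+1) =
        (Set.Ici lam).indicator (fun t => (∫ s in (0:ℝ)..(t - lam), delaySeq lam n s) ^ 2 + 1) := by
      funext t
      by_cases h : t < lam
      · simp [delaySeq, h, Set.indicator_of_notMem, not_le.mpr h]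
      · simp [delaySeq, h, Set.indicator_of_mem, not_lt.mp h]
    rw [heq]
    exact (hcont.locallyIntegrable).indicator measurableSet_Ici

lemma delaySeq_agree (lam : ℝ) (hlam : 0 < lam) :
    ∀ n : ℕ, ∀ t < ((n:ℝ)+1) * lam, delaySeq lam (n+1) t = delaySeq lam n t := by
  intro n
  induction n with
  | zero =>
    intro t ht
    simp only [Nat.cast_zero, zero_add, one_mul] at ht
    simp [delaySeq, ht]
  | succ n ih =>
    intro t ht
    by_cases h : t < lam
    · simp [delaySeq, h]
    · show (if t < lam then (0:ℝ) else _) = (if t < lam then (0:ℝ) else _)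
      rw [if_neg h, if_neg h]
      congr 2
      apply intervalIntegral.integral_congr
      intro s hs
      have h0 : (0:ℝ) ≤ t - lam := by linarith [not_lt.mp h]
      rw [Set.uIcc_of_le h0] at hs
      exact ih s (by push_cast at ht ⊢; linarith [hs.2])

lemma delaySeq_agree' (lam : ℝ) (hlam : 0 < lam) (n : ℕ) :
    ∀ m, n ≤ m → ∀ t < ((n:ℝ)+1) * lam, delaySeq lam m t = delaySeq lam n t := by
  intro m hm
  induction m with
  | zero => intro t _; cases Nat.le_zero.mp hm; rfl
  | succ m ih =>
    intro t ht
    rcases Nat.lt_or_ge n (m+1) with h | h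
    · have hnm : n ≤ m := Nat.lt_succ_iff.mp h
      have ht' : t < ((m:ℝ)+1) * lam := by
        have : ((n:ℝ)+1) ≤ ((m:ℝ)+1) := by exact_mod_cast Nat.succ_le_succ hnm
        calc t < ((n:ℝ)+1) * lam := ht
        _ ≤ ((m:ℝ)+1) * lam := by nlinarith
      rw [delaySeq_agree lam hlam m t ht', ih hnm t ht]
    · have : n = m + 1 := le_antisymm hm h
      subst this; rfl

/-- Example 2.1, global solvability for positive delay `λ ∈ (0, π]`: there is a unique
(up to a.e. equality) integrable function `y` on `[0,π]` with `y(t) = 0` for `t < λ` and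
`y(t) = (∫₀^{t−λ} y)² + 1` for `t ≥ λ`. -/
theorem example21_delay_global_solvability (lam : ℝ) (hlam : lam ∈ Set.Ioc (0:ℝ) π) :
    ∃ y : ℝ → ℝ, IntegrableOn y (Set.Icc 0 π) ∧
      (∀ᵐ t ∂(volume.restrict (Set.Icc (0:ℝ) π)),
        (t < lam → y t = 0) ∧
        (lam ≤ t → y t = (∫ s in (0:ℝ)..(t - lam), y s) ^ 2 + 1)) ∧
      ∀ z : ℝ → ℝ, IntegrableOn z (Set.Icc 0 π) →
        (∀ᵐ t ∂(volume.restrict (Set.Icc (0:ℝ) π)),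
          (t < lam → z t = 0) ∧
          (lam ≤ t → z t = (∫ s in (0:ℝ)..(t - lam), z s) ^ 2 + 1)) →
        z =ᵐ[volume.restrict (Set.Icc (0:ℝ) π)] y := by
  obtain ⟨hlam0, hlamπ⟩ := hlam
  -- choose N with π < N * lam
  obtain ⟨N, hN⟩ := Archimedean.arch π hlam0
  have hπN : π < ((N:ℝ) + 1) * lam := by
    have : π ≤ (N:ℝ) * lam := by simpa [nsmul_eq_mul] using hN
    nlinarith
  set y : ℝ → ℝ := delaySeq lam (N+1) with hy
  -- pointwise properties of y on [0, π]
  have hy0 : ∀ t, t < lam → y t = 0 := by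
    intro t ht; simp [hy, delaySeq, ht]
  have hyeq : ∀ t, lam ≤ t → t ≤ π → y t = (∫ s in (0:ℝ)..(t - lam), y s) ^ 2 + 1 := by
    intro t h1 h2
    have : y t = (∫ s in (0:ℝ)..(t - lam), delaySeq lam N s) ^ 2 + 1 := by
      simp [hy, delaySeq, not_lt.mpr h1]
    rw [this]
    congr 2
    apply intervalIntegral.integral_congr
    intro s hs
    have h0 : (0:ℝ) ≤ t - lam := by linarith
    rw [Set.uIcc_of_le h0] at hs
    symm
    apply delaySeq_agree lam hlam0 N s
    have : s ≤ t - lam := hs.2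
    nlinarith
  refine ⟨y, ?_, ?_, ?_⟩
  · exact (delaySeq_locInt lam (N+1)).integrableOn_isCompact isCompact_Icc
  · refine ae_restrict_of_forall_mem measurableSet_Icc ?_
    intro t ht
    exact ⟨hy0 t, fun h1 => hyeq t h1 ht.2⟩
  · intro z hzint hz
    -- uniqueness by induction
    have key : ∀ n : ℕ, ∀ᵐ t ∂(volume.restrict (Set.Icc (0:ℝ) π)),
        t < (n:ℝ) * lam → z t = y t := by
      intro n
      induction n with
      | zero =>
        filter_upwards [ae_restrict_mem measurableSet_Icc] with t ht h
        simp only [Nat.cast_zero, zero_mul] at h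
        linarith [ht.1]
      | succ n ih =>
        -- integral congruence from ih
        have ihglob : ∀ᵐ s ∂volume, s ∈ Set.Icc (0:ℝ) π → (s < (n:ℝ) * lam → z s = y s) :=
          (ae_restrict_iff' measurableSet_Icc).mp ih
        filter_upwards [hz, ae_restrict_mem measurableSet_Icc,
          ae_restrict_of_ae ihglob] with t htz ht _ htn
        by_cases h : t < lam
        · rw [htz.1 h, hy0 t h]
        · push_neg at h
          rw [htz.2 h, hyeq t h ht.2]
          congr 2
          apply intervalIntegral.integral_congr_ae
          have h0 : (0:ℝ) ≤ t - lam := by linarith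
          filter_upwards [ihglob] with s hs hsmem
          rw [Set.uIoc_of_le h0] at hsmem
          apply hs
          · exact ⟨le_of_lt hsmem.1, le_trans hsmem.2 (by linarith [ht.2])⟩
          · push_cast at htn ⊢
            have : s ≤ t - lam := hsmem.2
            nlinarith
    have := key (N+1)
    filter_upwards [this, ae_restrict_mem measurableSet_Icc] with t h ht
    apply h
    push_cast
    calc t ≤ π := ht.2
    _ < ((N:ℝ)+1) * lam := hπN
end

section
/- (Example 3.1: nonuniqueness for the Volterra neural field equation on the whole line.) Let ω(x) = (1/√(2π)) exp(−x²/2) be the standard Gaussian, so that ∫_ℝ ω(y) dy = 1. For every V ∈ ℝ, the function u(t,x) = V·exp(−e^{−t})·ω(x) satisfies u(t,x) = ∫_{−∞}^t ∫_ℝ e^{−s} ω(x) u(s,y) dy ds for all t ∈ ℝ and x ∈ ℝ; moreover sup_{x∈ℝ} |u(t,x)| → 0 as t → −∞, and u(t,·) is bounded and continuous for each t. Consequently, for distinct values of V these give distinct solutions, so the equation u(t,x) = ∫_{−∞}^t ∫_ℝ e^{−s} ω(x) u(s,y) dy ds has infinitely many solutions in C((−∞,b], BC(ℝ,ℝ)).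 -/
/-!
The time profile `exp (-exp (-t))` is a primitive of `exp (-t) * exp (-exp (-t))` vanishing at
`-∞`, so `exp (-exp (-t)) = ∫_{-∞}^t e^{-s} exp (-exp (-s)) ds`. Because the kernel
`e^{-s} ω(x)` factors and `∫ ω = 1`, every multiple `V exp (-exp (-t)) ω(x)` of this profile then
solves the Volterra equation, and the map `V ↦ u_V` is injective.
-/

open Set Filter Topology MeasureTheory Real

noncomputable section

def gaussOmega (x : ℝ) : ℝ := (1 / Real.sqrt (2 * π)) * Real.exp (-x ^ 2 / 2)

theorem integrableOn_Iic_deriv_of_nonneg {g g' : ℝ → ℝ} {t l : ℝ}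
    (hderiv : ∀ x ∈ Iic t, HasDerivAt g (g' x) x) (g'_nonneg : ∀ x ∈ Iic t, 0 ≤ g' x)
    (hg : Tendsto g atBot (𝓝 l)) : IntegrableOn g' (Iic t) := by
  have hderiv_uIcc : ∀ x ≤ t, ∀ y ∈ uIcc x t, HasDerivAt g (g' y) y := fun x hx y hy =>
    hderiv y (by rw [uIcc_of_le hx] at hy; exact hy.2)
  have hint : ∀ x, IntegrableOn g' (Ioc x t) := fun x =>
    intervalIntegral.integrableOn_deriv_of_nonneg
      (fun y hy => (hderiv y hy.2).continuousAt.continuousWithinAt)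
      (fun y hy => hderiv y hy.2.le) (fun y hy => g'_nonneg y hy.2.le)
  refine integrableOn_Iic_of_intervalIntegral_norm_tendsto (g t - l) t hint tendsto_id ?_
  refine (tendsto_const_nhds.sub hg).congr' ?_
  filter_upwards [Iic_mem_atBot t] with x hx
  have hxt : x ≤ t := hx
  calc g t - g x = ∫ y in x..t, g' y :=
        (intervalIntegral.integral_eq_sub_of_hasDerivAt (hderiv_uIcc x hxt)
          ((intervalIntegrable_iff_integrableOn_Ioc_of_le hxt).2 (hint x))).symm
    _ = ∫ y in x..t, ‖g' y‖ := by
        refine intervalIntegral.integral_congr fun y hy => ?_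
        rw [uIcc_of_le hxt] at hy
        exact (Real.norm_of_nonneg (g'_nonneg y hy.2)).symm

theorem hasDerivAt_exp_neg_exp_neg (s : ℝ) :
    HasDerivAt (fun s => exp (-exp (-s))) (exp (-s) * exp (-exp (-s))) s := by
  have := ((hasDerivAt_neg s).exp.neg).exp
  simpa [mul_comm] using this

theorem tendsto_exp_neg_exp_neg_atBot : Tendsto (fun s => exp (-exp (-s))) atBot (𝓝 0) :=
  tendsto_exp_atBot.comp <| tendsto_neg_atTop_atBot.comp <|
    tendsto_exp_atTop.comp tendsto_neg_atBot_atTop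

theorem integral_Iic_exp_neg_mul_exp_neg_exp_neg (t : ℝ) :
    ∫ s in Iic t, exp (-s) * exp (-exp (-s)) = exp (-exp (-t)) := by
  have hderiv : ∀ s ∈ Iic t, HasDerivAt (fun s => exp (-exp (-s)))
      (exp (-s) * exp (-exp (-s))) s := fun s _ => hasDerivAt_exp_neg_exp_neg s
  have hint := integrableOn_Iic_deriv_of_nonneg hderiv (fun s _ => by positivity)
    tendsto_exp_neg_exp_neg_atBot
  simpa using integral_Iic_of_hasDerivAt_of_tendsto' hderiv hint tendsto_exp_neg_exp_neg_atBot

theorem mul_mul_eq_integral_Iic_integral_of_integral_eq_one {w a g : ℝ → ℝ} (hw : ∫ y, w y = 1)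
    (hg : ∀ t, ∫ s in Iic t, a s * g s = g t) (V t x : ℝ) :
    V * g t * w x = ∫ s in Iic t, ∫ y, a s * w x * (V * g s * w y) := by
  have inner (s : ℝ) : ∫ y, a s * w x * (V * g s * w y) = V * w x * (a s * g s) := by
    simp_rw [← mul_assoc, integral_const_mul, hw]
    ring
  simp_rw [inner, integral_const_mul, hg]
  ring

theorem gaussOmega_eq_gaussianPDFReal : gaussOmega = ProbabilityTheory.gaussianPDFReal 0 1 := by
  ext x
  simp [gaussOmega, ProbabilityTheory.gaussianPDFReal]

theorem integral_gaussOmega : ∫ y, gaussOmega y = 1 := by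
  rw [gaussOmega_eq_gaussianPDFReal]
  exact ProbabilityTheory.integral_gaussianPDFReal_eq_one 0 one_ne_zero

theorem gaussOmega_pos (x : ℝ) : 0 < gaussOmega x := by
  rw [gaussOmega_eq_gaussianPDFReal]
  exact ProbabilityTheory.gaussianPDFReal_pos 0 1 x one_ne_zero

theorem gaussOmega_le_gaussOmega_zero (x : ℝ) : gaussOmega x ≤ gaussOmega 0 := by
  unfold gaussOmega
  gcongr _ * exp ?_
  nlinarith [sq_nonneg x]

theorem continuous_gaussOmega : Continuous gaussOmega := by
  unfold gaussOmega
  fun_prop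

theorem abs_mul_gaussOmega_le (c x : ℝ) : |c * gaussOmega x| ≤ |c| * gaussOmega 0 := by
  rw [abs_mul, abs_of_pos (gaussOmega_pos x)]
  exact mul_le_mul_of_nonneg_left (gaussOmega_le_gaussOmega_zero x) (abs_nonneg c)

theorem sSup_range_abs_mul_gaussOmega (c : ℝ) :
    sSup (range fun x => |c * gaussOmega x|) = |c| * gaussOmega 0 := by
  refine IsGreatest.csSup_eq ⟨⟨0, ?_⟩, ?_⟩
  · simp only [abs_mul, abs_of_pos (gaussOmega_pos 0)]
  · rintro _ ⟨x, rfl⟩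
    exact abs_mul_gaussOmega_le c x

def volterraSolution (V t x : ℝ) : ℝ := V * exp (-exp (-t)) * gaussOmega x

theorem volterraSolution_eq_integral (V t x : ℝ) :
    volterraSolution V t x =
      ∫ s in Iic t, ∫ y, exp (-s) * gaussOmega x * volterraSolution V s y :=
  mul_mul_eq_integral_Iic_integral_of_integral_eq_one integral_gaussOmega
    integral_Iic_exp_neg_mul_exp_neg_exp_neg V t x

theorem continuous_volterraSolution (V t : ℝ) : Continuous (volterraSolution V t) :=
  continuous_const.mul continuous_gaussOmega

theorem abs_volterraSolution_le (V t x : ℝ) :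
    |volterraSolution V t x| ≤ |V * exp (-exp (-t))| * gaussOmega 0 :=
  abs_mul_gaussOmega_le _ x

theorem tendsto_sSup_abs_volterraSolution (V : ℝ) :
    Tendsto (fun t => sSup (range fun x => |volterraSolution V t x|)) atBot (𝓝 0) := by
  simp only [volterraSolution, sSup_range_abs_mul_gaussOmega]
  simpa using (tendsto_exp_neg_exp_neg_atBot.const_mul |V|).mul_const (gaussOmega 0)

theorem volterraSolution_injective : Function.Injective volterraSolution := by
  intro V₁ V₂ h
  have h₀ := congrFun (congrFun h 0) 0
  simp only [volterraSolution, mul_assoc] at h₀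
  exact mul_right_cancel₀ (mul_pos (exp_pos _) (gaussOmega_pos 0)).ne' h₀

/-- Example 3.1: nonuniqueness for the Volterra neural field equation on the whole line.
For every `V`, `u(t,x) = V·exp(−e^{−t})·ω(x)` solves
`u(t,x) = ∫_{−∞}^t ∫_ℝ e^{−s} ω(x) u(s,y) dy ds`, tends to `0` in sup norm as `t → −∞`, and is
bounded and continuous in `x`; distinct `V` give distinct solutions, hence the equation has
infinitely many solutions in `C((−∞,b], BC(ℝ,ℝ))`. -/
theorem example31_nonuniqueness :
    (∫ y : ℝ, gaussOmega y) = 1 ∧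
    (∀ V : ℝ,
      (∀ t x : ℝ, V * Real.exp (-Real.exp (-t)) * gaussOmega x =
        ∫ s in Set.Iic t, ∫ y : ℝ,
          Real.exp (-s) * gaussOmega x * (V * Real.exp (-Real.exp (-s)) * gaussOmega y)) ∧
      Tendsto (fun t => sSup (Set.range fun x : ℝ =>
        |V * Real.exp (-Real.exp (-t)) * gaussOmega x|)) atBot (𝓝 0) ∧
      (∀ t : ℝ, Continuous (fun x : ℝ => V * Real.exp (-Real.exp (-t)) * gaussOmega x) ∧
        ∃ C : ℝ, ∀ x : ℝ, |V * Real.exp (-Real.exp (-t)) * gaussOmega x| ≤ C)) ∧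
    (∀ V₁ V₂ : ℝ, V₁ ≠ V₂ →
      (fun (t x : ℝ) => V₁ * Real.exp (-Real.exp (-t)) * gaussOmega x) ≠
        (fun (t x : ℝ) => V₂ * Real.exp (-Real.exp (-t)) * gaussOmega x)) ∧
    {u : ℝ → ℝ → ℝ |
      (∀ t : ℝ, Continuous (u t) ∧ ∃ C : ℝ, ∀ x : ℝ, |u t x| ≤ C) ∧
      Tendsto (fun t => sSup (Set.range fun x : ℝ => |u t x|)) atBot (𝓝 0) ∧
      ∀ t x : ℝ, u t x =
        ∫ s in Set.Iic t, ∫ y : ℝ, Real.exp (-s) * gaussOmega x * u s y}.Infinite := by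
  have regular (V t : ℝ) :
      Continuous (volterraSolution V t) ∧ ∃ C, ∀ x, |volterraSolution V t x| ≤ C :=
    ⟨continuous_volterraSolution V t, _, abs_volterraSolution_le V t⟩
  refine ⟨integral_gaussOmega,
    fun V => ⟨volterraSolution_eq_integral V, tendsto_sSup_abs_volterraSolution V, regular V⟩,
    fun V₁ V₂ => volterraSolution_injective.ne, ?_⟩
  exact infinite_of_injective_forall_mem volterraSolution_injective fun V =>
    ⟨regular V, tendsto_sSup_abs_volterraSolution V, volterraSolution_eq_integral V⟩
end
end
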